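/- arXiv:1201.4366 — 2 statements merged into one kernel-verified Lean document; each statement's English description precedes it below -/
import Mathlib

section
/- Let k: ℝ → ℝ be a nondecreasing function and suppose ∫_ℝ (1 ∧ (k(t−s) − k(−s))²) ds < ∞ for every t > 0. Then sup_{s∈ℝ} (k(1−s) − k(−s)) < ∞. -/
open MeasureTheory Set
open scoped ENNReal

theorem stmt11 (k : ℝ → ℝ) (hk : Monotone k)
    (hint : ∀ t : ℝ, 0 < t →
      ∫⁻ s : ℝ, ENNReal.ofReal (min 1 ((k (t - s) - k (-s)) ^ 2)) < ⊤) :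
    ∃ C : ℝ, ∀ s : ℝ, k (1 - s) - k (-s) ≤ C := by
  by_contra hc
  push_neg at hc
  -- Step 1: find points of increment ≥ 1 arbitrarily far out
  have key : ∀ M : ℝ, ∃ s : ℝ, max M 0 + 1 < |s| ∧ 1 ≤ k (1 - s) - k (-s) := by
    intro M
    set B := max M 0 + 1 with hB
    obtain ⟨s, hs⟩ := hc (max 1 (k (1 + B) - k (-B)))
    refine ⟨s, ?_, le_trans (le_max_left _ _) hs.le⟩
    by_contra hs'
    push_neg at hs'
    rw [abs_le] at hs'
    have h1 : k (1 - s) ≤ k (1 + B) := hk (by linarith [hs'.1])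
    have h2 : k (-B) ≤ k (-s) := hk (by linarith [hs'.2])
    have h3 := le_max_right 1 (k (1 + B) - k (-B))
    linarith
  choose pick hpick1 hpick2 using key
  -- Step 2: recursive sequence of thresholds
  let M : ℕ → ℝ := fun n => Nat.rec 0 (fun _ m => |pick m| + 1) n
  have hMsucc : ∀ n, M (n + 1) = |pick (M n)| + 1 := fun n => rfl
  have hM0 : ∀ n, 0 ≤ M n := by
    intro n
    induction n with
    | zero => exact le_refl _
    | succ n ih => rw [hMsucc]; positivity
  have hMs : ∀ n, M n + 1 < |pick (M n)| := by
    intro n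
    have := hpick1 (M n)
    rwa [max_eq_left (hM0 n)] at this
  have hMmono : StrictMono M := by
    apply strictMono_nat_of_lt_succ
    intro n
    rw [hMsucc]
    have := hMs n
    linarith
  set s : ℕ → ℝ := fun n => pick (M n) with hsdef
  set I : ℕ → Set ℝ := fun n => Icc (s n) (s n + 1) with hIdef
  -- membership bounds
  have habs : ∀ n, ∀ x ∈ I n, M n < |x| ∧ |x| ≤ M (n + 1) := by
    intro n x hx
    obtain ⟨hx1, hx2⟩ := hx
    have h1 := abs_sub_abs_le_abs_sub (s n) x
    have h2 := abs_sub_abs_le_abs_sub x (s n)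
    have h3 : |s n - x| = x - s n := by rw [abs_of_nonpos (by linarith)]; ring
    have h4 : |x - s n| = x - s n := abs_of_nonneg (by linarith)
    have h5 := hMs n
    have h6 := hMsucc n
    constructor
    · rw [h3] at h1; linarith
    · rw [h4] at h2; linarith
  -- intervals are pairwise disjoint
  have hdisj_lt : ∀ m n : ℕ, m < n → Disjoint (I m) (I n) := by
    intro m n hmn
    rw [Set.disjoint_left]
    intro x hxm hxn
    have h1 := (habs m x hxm).2
    have h2 := (habs n x hxn).1
    have h3 : M (m + 1) ≤ M n := hMmono.monotone hmn
    linarith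
  have hdisj : Pairwise (Function.onFun Disjoint I) := by
    intro m n hmn
    rcases lt_or_gt_of_ne hmn with h | h
    · exact hdisj_lt m n h
    · exact (hdisj_lt n m h).symm
  -- integrand ≥ 1 on I n
  have hlow : ∀ n, ∀ x ∈ I n, (1 : ℝ≥0∞) ≤ ENNReal.ofReal (min 1 ((k (2 - x) - k (-x)) ^ 2)) := by
    intro n x hx
    obtain ⟨hx1, hx2⟩ := hx
    have h1 : k (-x) ≤ k (-(s n)) := hk (by linarith)
    have h2 : k (1 - s n) ≤ k (2 - x) := hk (by linarith)
    have h3 : 1 ≤ k (1 - s n) - k (-(s n)) := hpick2 (M n)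
    have h4 : 1 ≤ k (2 - x) - k (-x) := by linarith
    have h5 : min 1 ((k (2 - x) - k (-x)) ^ 2) = 1 := by
      apply min_eq_left
      nlinarith
    rw [h5]
    simp
  have hfmeas : Measurable fun x : ℝ =>
      ENNReal.ofReal (min 1 ((k (2 - x) - k (-x)) ^ 2)) := by
    have hkm : Measurable k := hk.measurable
    have h1 : Measurable fun x : ℝ => k (2 - x) - k (-x) :=
      (hkm.comp (measurable_const.sub measurable_id)).sub (hkm.comp measurable_neg)
    exact (measurable_const.min (h1.pow_const 2)).ennreal_ofReal
  -- lower bound on each piece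
  have hpiece : ∀ n : ℕ, (1 : ℝ≥0∞) ≤
      ∫⁻ x in I n, ENNReal.ofReal (min 1 ((k (2 - x) - k (-x)) ^ 2)) := by
    intro n
    have h1 : ∫⁻ x in I n, (1 : ℝ≥0∞) ≤
        ∫⁻ x in I n, ENNReal.ofReal (min 1 ((k (2 - x) - k (-x)) ^ 2)) :=
      setLIntegral_mono hfmeas (hlow n)
    have h2 : ∫⁻ _ in I n, (1 : ℝ≥0∞) = volume (I n) := setLIntegral_one _
    rw [h2] at h1
    refine le_trans ?_ h1
    rw [hIdef]
    simp [Real.volume_Icc]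
  -- conclude
  have htop : (⊤ : ℝ≥0∞) ≤ ∫⁻ x : ℝ, ENNReal.ofReal (min 1 ((k (2 - x) - k (-x)) ^ 2)) := by
    calc (⊤ : ℝ≥0∞) = ∑' _ : ℕ, (1 : ℝ≥0∞) :=
          (ENNReal.tsum_const_eq_top_of_ne_zero one_ne_zero).symm
      _ ≤ ∑' n : ℕ, ∫⁻ x in I n, ENNReal.ofReal (min 1 ((k (2 - x) - k (-x)) ^ 2)) :=
          ENNReal.tsum_le_tsum hpiece
      _ = ∫⁻ x in ⋃ n, I n, ENNReal.ofReal (min 1 ((k (2 - x) - k (-x)) ^ 2)) :=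
          (lintegral_iUnion (fun n => measurableSet_Icc) hdisj _).symm
      _ ≤ ∫⁻ x : ℝ, ENNReal.ofReal (min 1 ((k (2 - x) - k (-x)) ^ 2)) :=
          lintegral_mono' Measure.restrict_le_self (le_refl _)
  have hf2 := hint 2 two_pos
  rw [top_le_iff] at htop
  rw [htop] at hf2
  exact lt_irrefl _ hf2
end

section
/- Let α ∈ (0, 1/2). Then ∫_0^∞ (1 ∧ (α·(s+1)^{α−1}·|x|)²) ds ≥ c · |αx|^{1/(1−α)}/(1−2α) for all x with |αx| > 1, for some absolute constant c > 0. In particular, finiteness of ∫_0^∞ (1 ∧ ((s+1)^{α−1}αx)²) ds·(over x, ρ) forces ∫_{|αx|>1} |αx|^{1/(1−α)}/(1−2α) ρ(dx) < ∞ whenever ∫_0^∞∫_ℝ (1 ∧ (α(s+1)^{α−1}x)²) ρ(dx) ds < ∞. -/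
/-!
Put `T = |αx| ^ (1 / (1 - α))`. For `s ≥ T - 1` the truncation `min 1` is inactive, and
`∫_{T-1}^∞ (α (s+1)^(α-1) x)² ds = T / (1 - 2α)` exactly, which gives the first bound with `c = 1`.

For the moment bound, `ρ` need not be s-finite, so Tonelli is unavailable. Instead, the integrand
is antitone in `s`, so Riemann sums over unit intervals compare `∫ dρ ∫ ds` with `∫ ds ∫ dρ` up to
a unit shift in `s`; that shift costs at most a factor `4`, since `(s+2)^(α-1) ≥ (s+1)^(α-1) / 2`.
-/

open MeasureTheory Set

open scoped ENNReal

noncomputable def truncSqKernel (α s x : ℝ) : ℝ≥0∞ :=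
  ENNReal.ofReal (min 1 ((α * (s + 1) ^ (α - 1) * x) ^ 2))

lemma Ioi_zero_eq_iUnion_Ioc_natCast : Ioi (0 : ℝ) = ⋃ n : ℕ, Ioc (n : ℝ) (n + 1) := by
  ext s
  simp only [mem_Ioi, mem_iUnion, mem_Ioc]
  constructor
  · intro hs
    refine ⟨⌈s⌉₊ - 1, ?_⟩
    have h := (Nat.ceil_eq_iff (Nat.ceil_pos.2 hs).ne').1 rfl
    push_cast [Nat.one_le_ceil_iff.2 hs] at h ⊢
    constructor <;> linarith [h.1, h.2]
  · rintro ⟨n, hn, -⟩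
    exact (Nat.cast_nonneg n).trans_lt hn

lemma pairwise_disjoint_Ioc_natCast :
    Pairwise (Function.onFun Disjoint fun n : ℕ => Ioc (n : ℝ) (n + 1)) := fun m n hmn => by
  simpa using pairwise_disjoint_Ioc_add_intCast (0 : ℝ) (Nat.cast_injective.ne hmn : (m : ℤ) ≠ n)

lemma lintegral_Ioi_zero_eq_tsum_Ioc (f : ℝ → ℝ≥0∞) :
    ∫⁻ s in Ioi 0, f s = ∑' n : ℕ, ∫⁻ s in Ioc (n : ℝ) (n + 1), f s := by
  rw [Ioi_zero_eq_iUnion_Ioc_natCast,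
    lintegral_iUnion (fun _ => measurableSet_Ioc) pairwise_disjoint_Ioc_natCast]

lemma setLIntegral_Ioc_add_one_const (a : ℝ) (c : ℝ≥0∞) : ∫⁻ _ in Ioc a (a + 1), c = c := by
  simp [Real.volume_Ioc]

theorem lintegral_lintegral_Ioi_add_one_le {X : Type*} [MeasurableSpace X] (ρ : Measure X)
    {g : ℝ → X → ℝ≥0∞} (hg : ∀ x, AntitoneOn (g · x) (Ioi 0)) (hmeas : ∀ s, Measurable (g s)) :
    ∫⁻ x, (∫⁻ s in Ioi 0, g (s + 1) x) ∂ρ ≤ ∫⁻ s in Ioi 0, ∫⁻ x, g s x ∂ρ := by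
  have hpos : ∀ n : ℕ, (n : ℝ) + 1 ∈ Ioi (0 : ℝ) := fun n => by
    simp only [mem_Ioi]; positivity
  calc ∫⁻ x, (∫⁻ s in Ioi 0, g (s + 1) x) ∂ρ
      ≤ ∫⁻ x, ∑' n : ℕ, g ((n : ℝ) + 1) x ∂ρ := lintegral_mono fun x => by
        rw [lintegral_Ioi_zero_eq_tsum_Ioc]
        refine ENNReal.tsum_le_tsum fun n => ?_
        refine (setLIntegral_mono' measurableSet_Ioc fun s hs => ?_).trans_eq
          (setLIntegral_Ioc_add_one_const _ _)
        exact hg x (hpos n) (by simp only [mem_Ioi]; linarith [(Nat.cast_nonneg n).trans_lt hs.1])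
          (by linarith [hs.1])
    _ = ∑' n : ℕ, ∫⁻ x, g ((n : ℝ) + 1) x ∂ρ := lintegral_tsum fun n => (hmeas _).aemeasurable
    _ ≤ ∑' n : ℕ, ∫⁻ s in Ioc (n : ℝ) (n + 1), ∫⁻ x, g s x ∂ρ := by
        refine ENNReal.tsum_le_tsum fun n => ?_
        refine (setLIntegral_Ioc_add_one_const _ _).symm.trans_le
          (setLIntegral_mono' measurableSet_Ioc fun s hs => lintegral_mono fun x => ?_)
        exact hg x ((Nat.cast_nonneg n).trans_lt hs.1) (hpos n) hs.2
    _ = ∫⁻ s in Ioi 0, ∫⁻ x, g s x ∂ρ := (lintegral_Ioi_zero_eq_tsum_Ioc _).symm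

lemma lintegral_Ioi_rpow_of_lt {p c : ℝ} (hp : p < -1) (hc : 0 < c) :
    ∫⁻ t in Ioi c, ENNReal.ofReal (t ^ p) = ENNReal.ofReal (-c ^ (p + 1) / (p + 1)) := by
  rw [← ofReal_integral_eq_lintegral_ofReal (integrableOn_Ioi_rpow_of_lt hp hc),
    integral_Ioi_rpow_of_lt hp hc]
  filter_upwards [ae_restrict_mem measurableSet_Ioi] with t ht
  exact Real.rpow_nonneg (hc.trans ht).le _

lemma setLIntegral_Ioi_comp_add_one (f : ℝ → ℝ≥0∞) (c : ℝ) :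
    ∫⁻ s in Ioi (c - 1), f (s + 1) = ∫⁻ t in Ioi c, f t := by
  rw [← preimage_add_const_Ioi]
  exact (measurePreserving_add_right volume 1).setLIntegral_comp_preimage_emb
    (measurableEmbedding_addRight 1) f (Ioi c)

lemma ofReal_min_one_sq_le {a b c : ℝ} (hc : 1 ≤ c) (hab : |a| ≤ c * |b|) :
    ENNReal.ofReal (min 1 (a ^ 2)) ≤ ENNReal.ofReal (c ^ 2) * ENNReal.ofReal (min 1 (b ^ 2)) := by
  rw [← ENNReal.ofReal_mul (sq_nonneg c), mul_min_of_nonneg _ _ (sq_nonneg c), mul_one]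
  refine ENNReal.ofReal_le_ofReal (min_le_min (one_le_pow₀ hc) ?_)
  calc a ^ 2 = |a| ^ 2 := (sq_abs a).symm
    _ ≤ (c * |b|) ^ 2 := pow_le_pow_left₀ (abs_nonneg a) hab 2
    _ = c ^ 2 * b ^ 2 := by rw [mul_pow, sq_abs]

lemma abs_mul_rpow_mul {α u : ℝ} (hu : 0 ≤ u) (x : ℝ) :
    |α * u ^ (α - 1) * x| = u ^ (α - 1) * |α * x| := by
  rw [mul_right_comm, abs_mul, abs_of_nonneg (Real.rpow_nonneg hu _), mul_comm]

section Kernel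

variable {α : ℝ}

lemma truncSqKernel_abs (s x : ℝ) : truncSqKernel α s |x| = truncSqKernel α s x := by
  simp only [truncSqKernel, mul_pow, sq_abs]

lemma measurable_truncSqKernel (α s : ℝ) : Measurable (truncSqKernel α s) := by
  unfold truncSqKernel; fun_prop

lemma truncSqKernel_antitoneOn (hα : α ≤ 1) (x : ℝ) :
    AntitoneOn (truncSqKernel α · x) (Ioi (-1)) := by
  intro s hs t ht hst
  have hs1 : 0 < s + 1 := by simp only [mem_Ioi] at hs; linarith
  have habs : |α * (t + 1) ^ (α - 1) * x| ≤ 1 * |α * (s + 1) ^ (α - 1) * x| := by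
    rw [one_mul, abs_mul_rpow_mul hs1.le, abs_mul_rpow_mul (by linarith)]
    exact mul_le_mul_of_nonneg_right
      (Real.rpow_le_rpow_of_nonpos hs1 (by linarith) (by linarith)) (abs_nonneg _)
  simpa only [truncSqKernel, one_pow, ENNReal.ofReal_one, one_mul] using
    ofReal_min_one_sq_le le_rfl habs

lemma truncSqKernel_le_four_mul_add_one (hα0 : 0 ≤ α) (hα1 : α ≤ 1) {s : ℝ} (hs : 0 ≤ s)
    (x : ℝ) : truncSqKernel α s x ≤ 4 * truncSqKernel α (s + 1) x := by
  have hle : (s + 1) ^ (α - 1) ≤ 2 * (s + 1 + 1) ^ (α - 1) :=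
    calc (s + 1) ^ (α - 1) = 2 * (2 ^ (-1 : ℝ) * (s + 1) ^ (α - 1)) := by
          rw [Real.rpow_neg_one]; ring
      _ ≤ 2 * (2 ^ (α - 1) * (s + 1) ^ (α - 1)) := by
          gcongr
          · norm_num
          · linarith
      _ = 2 * (2 * (s + 1)) ^ (α - 1) := by
          rw [Real.mul_rpow (by norm_num) (by linarith)]
      _ ≤ 2 * (s + 1 + 1) ^ (α - 1) :=
          mul_le_mul_of_nonneg_left
            (Real.rpow_le_rpow_of_nonpos (by linarith) (by linarith) (by linarith)) zero_le_two
  have habs : |α * (s + 1) ^ (α - 1) * x| ≤ 2 * |α * (s + 1 + 1) ^ (α - 1) * x| := by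
    rw [abs_mul_rpow_mul (by linarith), abs_mul_rpow_mul (by linarith), ← mul_assoc]
    gcongr
  exact (ofReal_min_one_sq_le one_le_two habs).trans_eq (by rw [truncSqKernel]; norm_num)

end Kernel

lemma lintegral_Ioi_sq_rpow_mul_rpow {α T : ℝ} (hα : α < 1 / 2) (hT : 0 < T) :
    ∫⁻ t in Ioi T, ENNReal.ofReal ((T ^ (1 - α) * t ^ (α - 1)) ^ 2)
      = ENNReal.ofReal (T / (1 - 2 * α)) := by
  have hp : 2 * α - 2 < -1 := by linarith
  have hpow : T ^ (2 - 2 * α) * T ^ (2 * α - 2 + 1) = T := by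
    rw [← Real.rpow_add hT, show 2 - 2 * α + (2 * α - 2 + 1) = 1 by ring, Real.rpow_one]
  calc ∫⁻ t in Ioi T, ENNReal.ofReal ((T ^ (1 - α) * t ^ (α - 1)) ^ 2)
      = ∫⁻ t in Ioi T, ENNReal.ofReal (T ^ (2 - 2 * α)) * ENNReal.ofReal (t ^ (2 * α - 2)) := by
        refine setLIntegral_congr_fun measurableSet_Ioi fun t ht => ?_
        rw [← ENNReal.ofReal_mul (by positivity), mul_pow, ← Real.rpow_mul_natCast hT.le,
          ← Real.rpow_mul_natCast (hT.trans ht).le]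
        ring_nf
    _ = ENNReal.ofReal (T ^ (2 - 2 * α))
          * ENNReal.ofReal (-T ^ (2 * α - 2 + 1) / (2 * α - 2 + 1)) := by
        rw [lintegral_const_mul' _ _ ENNReal.ofReal_ne_top, lintegral_Ioi_rpow_of_lt hp hT]
    _ = ENNReal.ofReal (T / (1 - 2 * α)) := by
        rw [← ENNReal.ofReal_mul (by positivity), mul_div_assoc', mul_neg, hpow]
        congr 1
        rw [← neg_div_neg_eq, neg_neg]
        ring_nf

theorem ofReal_rpow_div_le_lintegral_truncSqKernel {α x : ℝ} (hα0 : 0 < α) (hα2 : α < 1 / 2)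
    (hx : 1 < |α * x|) :
    ENNReal.ofReal (|α * x| ^ (1 / (1 - α)) / (1 - 2 * α))
      ≤ ∫⁻ s in Ioi 0, truncSqKernel α s x := by
  set T := |α * x| ^ (1 / (1 - α)) with hT
  have hT1 : 1 < T := Real.one_lt_rpow hx (by apply one_div_pos.2; linarith)
  have hT0 : 0 ≤ T := by linarith
  have hAT : |α * x| = T ^ (1 - α) := by
    rw [hT, one_div, Real.rpow_inv_rpow (abs_nonneg _) (by linarith)]
  have hK : ∀ s ∈ Ioi (T - 1),
      truncSqKernel α s x = ENNReal.ofReal ((T ^ (1 - α) * (s + 1) ^ (α - 1)) ^ 2) := by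
    intro s hs
    have hs1 : T ≤ s + 1 := by rw [mem_Ioi] at hs; linarith
    have hsq : (α * (s + 1) ^ (α - 1) * x) ^ 2 = (T ^ (1 - α) * (s + 1) ^ (α - 1)) ^ 2 := by
      rw [← sq_abs, abs_mul_rpow_mul (by linarith), hAT, mul_comm]
    have hle : T ^ (1 - α) * (s + 1) ^ (α - 1) ≤ 1 :=
      calc T ^ (1 - α) * (s + 1) ^ (α - 1) ≤ T ^ (1 - α) * T ^ (α - 1) :=
            mul_le_mul_of_nonneg_left
              (Real.rpow_le_rpow_of_nonpos (by linarith) hs1 (by linarith))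
              (Real.rpow_nonneg hT0 _)
        _ = 1 := by rw [← Real.rpow_add (by linarith)]; simp
    rw [truncSqKernel, hsq, min_eq_right (pow_le_one₀
      (mul_nonneg (Real.rpow_nonneg hT0 _) (Real.rpow_nonneg (by linarith) _)) hle)]
  calc ENNReal.ofReal (T / (1 - 2 * α))
      = ∫⁻ t in Ioi T, ENNReal.ofReal ((T ^ (1 - α) * t ^ (α - 1)) ^ 2) :=
        (lintegral_Ioi_sq_rpow_mul_rpow hα2 (by linarith)).symm
    _ = ∫⁻ s in Ioi (T - 1), ENNReal.ofReal ((T ^ (1 - α) * (s + 1) ^ (α - 1)) ^ 2) :=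
        (setLIntegral_Ioi_comp_add_one _ T).symm
    _ = ∫⁻ s in Ioi (T - 1), truncSqKernel α s x :=
        (setLIntegral_congr_fun measurableSet_Ioi hK).symm
    _ ≤ ∫⁻ s in Ioi 0, truncSqKernel α s x := lintegral_mono_set (Ioi_subset_Ioi (by linarith))

theorem setLIntegral_rpow_le_four_mul_lintegral_lintegral_truncSqKernel {α : ℝ} (hα0 : 0 < α)
    (hα2 : α < 1 / 2) (ρ : Measure ℝ) :
    ∫⁻ x in {x : ℝ | 1 < |α * x|}, ENNReal.ofReal (|α * x| ^ (1 / (1 - α)) / (1 - 2 * α)) ∂ρ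
      ≤ 4 * ∫⁻ s in Ioi 0, ∫⁻ x, truncSqKernel α s x ∂ρ := by
  have hα1 : α ≤ 1 := by linarith
  have hS : MeasurableSet {x : ℝ | 1 < |α * x|} := measurableSet_lt measurable_const (by fun_prop)
  calc ∫⁻ x in {x : ℝ | 1 < |α * x|}, ENNReal.ofReal (|α * x| ^ (1 / (1 - α)) / (1 - 2 * α)) ∂ρ
      ≤ ∫⁻ x in {x : ℝ | 1 < |α * x|}, (∫⁻ s in Ioi 0, truncSqKernel α s x) ∂ρ :=
        setLIntegral_mono' hS fun x hx => ofReal_rpow_div_le_lintegral_truncSqKernel hα0 hα2 hx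
    _ ≤ ∫⁻ x, (∫⁻ s in Ioi 0, truncSqKernel α s x) ∂ρ := setLIntegral_le_lintegral _ _
    _ ≤ ∫⁻ x, 4 * (∫⁻ s in Ioi 0, truncSqKernel α (s + 1) x) ∂ρ := lintegral_mono fun x =>
        (setLIntegral_mono' measurableSet_Ioi fun s hs =>
          truncSqKernel_le_four_mul_add_one hα0.le hα1 (le_of_lt hs) x).trans_eq
          (lintegral_const_mul' _ _ (by simp))
    _ = 4 * ∫⁻ x, (∫⁻ s in Ioi 0, truncSqKernel α (s + 1) x) ∂ρ :=
        lintegral_const_mul' _ _ (by simp)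
    _ ≤ 4 * ∫⁻ s in Ioi 0, ∫⁻ x, truncSqKernel α s x ∂ρ := mul_le_mul_right
        (lintegral_lintegral_Ioi_add_one_le ρ
          (fun x => (truncSqKernel_antitoneOn hα1 x).mono (Ioi_subset_Ioi (by norm_num)))
          (measurable_truncSqKernel α)) 4

/-- Inequality (4.7)/(4.8): for `α ∈ (0,1/2)` and `|αx| > 1`,
`∫_0^∞ (1 ∧ (α(s+1)^{α−1}|x|)²) ds ≥ c |αx|^{1/(1−α)}/(1−2α)` for an absolute
constant `c > 0`; in particular finiteness of the double integral forces
`∫_{|αx|>1} |αx|^{1/(1−α)}/(1−2α) ρ(dx) < ∞`. -/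
theorem stmt19 :
    ∃ c : ℝ, 0 < c ∧ ∀ α : ℝ, α ∈ Set.Ioo (0 : ℝ) (1 / 2) →
      (∀ x : ℝ, 1 < |α * x| →
        ENNReal.ofReal (c * |α * x| ^ (1 / (1 - α)) / (1 - 2 * α))
          ≤ ∫⁻ s in Set.Ioi (0 : ℝ),
              ENNReal.ofReal (min 1 ((α * (s + 1) ^ (α - 1) * |x|) ^ 2))) ∧
      ∀ ρ : Measure ℝ,
        (∫⁻ s in Set.Ioi (0 : ℝ),
            ∫⁻ x, ENNReal.ofReal (min 1 ((α * (s + 1) ^ (α - 1) * x) ^ 2)) ∂ρ) < ⊤ →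
        (∫⁻ x in {x : ℝ | 1 < |α * x|},
            ENNReal.ofReal (|α * x| ^ (1 / (1 - α)) / (1 - 2 * α)) ∂ρ) < ⊤ := by
  refine ⟨1, one_pos, fun α ⟨hα0, hα2⟩ => ⟨fun x hx => ?_, fun ρ hρ => ?_⟩⟩
  · rw [one_mul]
    exact (ofReal_rpow_div_le_lintegral_truncSqKernel hα0 hα2 hx).trans_eq
      (lintegral_congr fun s => (truncSqKernel_abs s x).symm)
  · exact (setLIntegral_rpow_le_four_mul_lintegral_lintegral_truncSqKernel hα0 hα2 ρ).trans_lt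
      (ENNReal.mul_lt_top (by simp) hρ)
end
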